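/- Let E be a real normed vector space and K a simplicial complex in E (in the sense of Mathlib's Geometry.SimplicialComplex over ℝ). Let W ∈ K.faces be a face, and let c be any point of intrinsicInterior ℝ (convexHull ℝ ↑W). Then the intersection ⋂_{v ∈ W} st(v) of the open stars of the vertices of W contains c and is star-convex with respect to c: StarConvex ℝ c (⋂_{v ∈ W} st v). In particular, this intersection is nonempty. -/

import Mathlib

open Set

theorem intrinsicInterior_eq_interior_of_affineSpan_eq_top
    {V : Type*} [NormedAddCommGroup V] [NormedSpace ℝ V] {s : Set V}
    (h : affineSpan ℝ s = ⊤) : intrinsicInterior ℝ s = interior s := by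
  refine subset_antisymm ?_ interior_subset_intrinsicInterior
  rintro x ⟨y, hy, rfl⟩
  have hrange : Set.range ((↑) : affineSpan ℝ s → V) = Set.univ := by
    rw [Subtype.range_coe]; simp [h]
  have hemb : Topology.IsOpenEmbedding ((↑) : affineSpan ℝ s → V) :=
    ⟨Topology.IsEmbedding.subtypeVal, by rw [hrange]; exact isOpen_univ⟩
  have himg : ((↑) : affineSpan ℝ s → V) '' (((↑) : affineSpan ℝ s → V) ⁻¹' s) = s := by
    rw [Set.image_preimage_eq_inter_range, hrange, Set.inter_univ]
  have := hemb.isOpenMap.image_interior_subset (((↑) : affineSpan ℝ s → V) ⁻¹' s)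
  rw [himg] at this
  exact this ⟨y, hy, rfl⟩

theorem exists_barycentric_coords {E : Type*} [NormedAddCommGroup E] [NormedSpace ℝ E]
    (s : Finset E) (hs : AffineIndependent ℝ ((↑) : s → E)) (hne : s.Nonempty) :
    ∃ κ : E → E →ᵃ[ℝ] ℝ,
      (∀ v ∈ s, κ v v = 1) ∧
      (∀ v ∈ s, ∀ u ∈ s, u ≠ v → κ v u = 0) ∧
      (∀ x ∈ convexHull ℝ (s : Set E), ∀ v ∈ s, 0 ≤ κ v x) ∧
      (intrinsicInterior ℝ (convexHull ℝ (s : Set E)) =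
        {x | x ∈ convexHull ℝ (s : Set E) ∧ ∀ v ∈ s, 0 < κ v x}) := by
  classical
  obtain ⟨p, hp⟩ := hne
  set W : Submodule ℝ E := vectorSpan ℝ (s : Set E) with hW
  haveI : FiniteDimensional ℝ W := finiteDimensional_vectorSpan_of_finite ℝ s.finite_toSet
  -- the affine isometry z ↦ p + z from W to E
  let φ : W →ᵃⁱ[ℝ] E :=
    (AffineIsometryEquiv.constVAdd ℝ E p).toAffineIsometry.comp W.subtypeₗᵢ.toAffineIsometry
  have hφ : ∀ z : W, φ z = p + (z : E) := fun z => rfl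
  have hφinj : Function.Injective φ := φ.injective
  set s' : Set W := (fun z : W => φ z) ⁻¹' (s : Set E) with hs'
  have hmem : ∀ v ∈ s, v - p ∈ W := fun v hv => vsub_mem_vectorSpan ℝ hv hp
  have hmem' : ∀ v (hv : v ∈ s), (⟨v - p, hmem v hv⟩ : W) ∈ s' := by
    intro v hv
    show φ _ ∈ (s : Set E)
    rw [hφ]; simpa using hv
  have himg : φ '' s' = (s : Set E) := by
    apply subset_antisymm
    · rintro _ ⟨z, hz, rfl⟩; exact hz
    · intro v hv
      exact ⟨⟨v - p, hmem v hv⟩, hmem' v hv, by rw [hφ]; simp⟩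
  have hs'fin : s'.Finite := Set.Finite.preimage hφinj.injOn s.finite_toSet
  haveI : Fintype s' := hs'fin.fintype
  -- affine independence of s'
  have hindep : AffineIndependent ℝ ((↑) : s' → W) := by
    have h1 : AffineIndependent ℝ (fun z : s' => φ (z : W)) := by
      have := hs.comp_embedding
        (⟨fun z : s' => ⟨φ (z : W), z.2⟩,
          fun a b hab => Subtype.ext (hφinj (congrArg Subtype.val hab))⟩ : s' ↪ s)
      exact this
    exact AffineIndependent.of_comp φ.toAffineMap h1
  -- span of s' is everything
  have hspan : affineSpan ℝ s' = ⊤ := by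
    have hne' : s'.Nonempty := ⟨⟨p - p, hmem p hp⟩, hmem' p hp⟩
    rw [AffineSubspace.affineSpan_eq_top_iff_vectorSpan_eq_top_of_nonempty ℝ ↥W ↥W hne']
    have hlin : φ.toAffineMap.linear = W.subtype := rfl
    have := (φ.toAffineMap.vectorSpan_image_eq_submodule_map (s := s')).symm
    rw [hlin] at this
    have h2 : φ.toAffineMap '' s' = (s : Set E) := himg
    rw [h2] at this
    -- this : Submodule.map W.subtype (vectorSpan ℝ s') = vectorSpan ℝ ↑s = W
    have h3 : Submodule.map W.subtype (vectorSpan ℝ s') = Submodule.map W.subtype ⊤ := by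
      rw [Submodule.map_subtype_top, ← this]
    exact Submodule.map_injective_of_injective W.injective_subtype h3
  -- the affine basis
  let b : AffineBasis s' ℝ W := ⟨(↑), hindep, by rw [Subtype.range_coe]; exact hspan⟩
  have hbcoe : ∀ i : s', b i = (i : W) := fun i => rfl
  -- hull of s and hull of s'
  have hhull : convexHull ℝ (s : Set E) = φ.toAffineMap '' convexHull ℝ s' := by
    rw [AffineMap.image_convexHull]
    congr 1
    exact himg.symm
  -- interior characterization
  have hbfun : ⇑b = ((↑) : s' → W) := rfl
  have hint : interior (convexHull ℝ s') = {z : W | ∀ i : s', 0 < b.coord i z} := by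
    have := b.interior_convexHull
    rwa [hbfun, Subtype.range_coe] at this
  have hii : intrinsicInterior ℝ (convexHull ℝ (s : Set E))
      = φ '' interior (convexHull ℝ s') := by
    rw [hhull]
    have : intrinsicInterior ℝ (φ.toAffineMap '' convexHull ℝ s')
        = φ '' intrinsicInterior ℝ (convexHull ℝ s') := by
      exact φ.image_intrinsicInterior (convexHull ℝ s')
    rw [this, intrinsicInterior_eq_interior_of_affineSpan_eq_top (by
      rw [affineSpan_convexHull]; exact hspan)]
  -- the linear retraction and the coordinates on E
  obtain ⟨g, hg⟩ := LinearMap.exists_extend (LinearMap.id : W →ₗ[ℝ] W)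
  have hgval : ∀ z : W, g (z : E) = z := fun z => by
    have := LinearMap.congr_fun hg z
    simpa using this
  let Φ : E →ᵃ[ℝ] W := g.toAffineMap.comp ((AffineEquiv.constVAdd ℝ E (-p)).toAffineMap)
  have hΦ : ∀ z : W, Φ (φ z) = z := by
    intro z
    show g (-p +ᵥ (p + (z : E))) = z
    rw [vadd_eq_add]
    have : -p + (p + (z : E)) = (z : E) := by abel
    rw [this, hgval]
  -- index of a vertex
  let idx : ∀ v, v ∈ s → s' := fun v hv => ⟨⟨v - p, hmem v hv⟩, hmem' v hv⟩
  have hφidx : ∀ v (hv : v ∈ s), φ (idx v hv : W) = v := by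
    intro v hv; rw [hφ]; simp [idx]
  -- the coordinates
  let κ : E → E →ᵃ[ℝ] ℝ := fun v =>
    if hv : v ∈ s then (b.coord (idx v hv)).comp Φ else 0
  have hκ : ∀ v (hv : v ∈ s) (z : W), κ v (φ z) = b.coord (idx v hv) z := by
    intro v hv z
    simp only [κ, dif_pos hv, AffineMap.comp_apply, hΦ]
  have hidx_surj : ∀ i : s', idx (φ (i : W)) i.2 = i := by
    intro i
    apply Subtype.ext
    apply Subtype.ext
    show (φ (i : W)) - p = ((i : W) : E)
    rw [hφ]; abel
  refine ⟨κ, ?_, ?_, ?_, ?_⟩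
  · intro v hv
    rw [show κ v v = κ v (φ (idx v hv : W)) by rw [hφidx v hv], hκ v hv]
    exact b.coord_apply_eq (idx v hv)
  · intro v hv u hu hne
    rw [show κ v u = κ v (φ (idx u hu : W)) by rw [hφidx u hu], hκ v hv]
    have hij : idx v hv ≠ idx u hu := by
      intro h
      apply hne
      rw [← hφidx u hu, ← h, hφidx v hv]
    have := b.coord_apply_ne hij
    rwa [hbcoe] at this
  · intro x hx v hv
    rw [hhull] at hx
    obtain ⟨z, hz, rfl⟩ := hx
    rw [show φ.toAffineMap z = φ z from rfl, hκ v hv]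
    have : z ∈ {w : W | ∀ i : s', 0 ≤ b.coord i w} := by
      rw [← b.convexHull_eq_nonneg_coord, hbfun, Subtype.range_coe]
      exact hz
    exact this (idx v hv)
  · rw [hii]
    apply subset_antisymm
    · rintro _ ⟨z, hz, rfl⟩
      constructor
      · rw [hhull]
        exact ⟨z, interior_subset hz, rfl⟩
      · intro v hv
        rw [hκ v hv]
        rw [hint] at hz
        exact hz (idx v hv)
    · rintro x ⟨hx, hpos⟩
      rw [hhull] at hx
      obtain ⟨z, hz, rfl⟩ := hx
      refine ⟨z, ?_, rfl⟩
      rw [hint]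
      intro i
      have := hpos (φ (i : W)) i.2
      rw [show φ.toAffineMap z = φ z from rfl] at this
      rw [hκ _ i.2, hidx_surj] at this
      exact this

/-- If a point of the intrinsic interior of the hull of an affinely independent finite set
lies in the hull of a subset, then the subset is everything. -/
theorem subset_of_interiorPoint_mem_convexHull {E : Type*} [NormedAddCommGroup E]
    [NormedSpace ℝ E] {s r : Finset E} (hs : AffineIndependent ℝ ((↑) : s → E))
    (hne : s.Nonempty) (hr : r ⊆ s) {x : E}
    (hx : x ∈ intrinsicInterior ℝ (convexHull ℝ (s : Set E)))
    (hxr : x ∈ convexHull ℝ (r : Set E)) : s ⊆ r := by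
  obtain ⟨κ, hκ1, hκ0, hκnn, hchar⟩ := exists_barycentric_coords s hs hne
  intro v hv
  by_contra hvr
  have hpos : 0 < κ v x := by
    rw [hchar] at hx
    exact hx.2 v hv
  have hmem : κ v x ∈ (κ v) '' (convexHull ℝ (r : Set E)) := ⟨x, hxr, rfl⟩
  rw [AffineMap.image_convexHull] at hmem
  have hsub : (κ v) '' (r : Set E) ⊆ {(0 : ℝ)} := by
    rintro _ ⟨u, hu, rfl⟩
    have : u ≠ v := fun h => hvr (h ▸ hu)
    simp [hκ0 v hv u (hr hu) this]
  have : κ v x ∈ ({(0:ℝ)} : Set ℝ) := by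
    have := (convexHull_mono hsub).trans (by rw [convexHull_singleton]) hmem
    exact this
  simp at this
  exact hpos.ne' (by simpa using this)

/-- Distinct faces of a simplicial complex have disjoint intrinsic interiors. -/
theorem Geometry.SimplicialComplex.eq_of_mem_intrinsicInterior
    {E : Type*} [NormedAddCommGroup E] [NormedSpace ℝ E]
    (K : Geometry.SimplicialComplex ℝ E) {s t : Finset E}
    (hsf : s ∈ K.faces) (htf : t ∈ K.faces) {x : E}
    (hxs : x ∈ intrinsicInterior ℝ (convexHull ℝ (s : Set E)))
    (hxt : x ∈ intrinsicInterior ℝ (convexHull ℝ (t : Set E))) : s = t := by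
  classical
  have hsne : s.Nonempty := Finset.nonempty_of_ne_empty (fun h => K.empty_notMem (h ▸ hsf))
  have htne : t.Nonempty := Finset.nonempty_of_ne_empty (fun h => K.empty_notMem (h ▸ htf))
  have hxst : x ∈ convexHull ℝ ((s ∩ t : Finset E) : Set E) := by
    have := K.inter_subset_convexHull hsf htf
      ⟨intrinsicInterior_subset hxs, intrinsicInterior_subset hxt⟩
    rwa [← Finset.coe_inter] at this
  have h1 : s ⊆ s ∩ t :=
    subset_of_interiorPoint_mem_convexHull (K.indep hsf) hsne Finset.inter_subset_left hxs hxst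
  have h2 : t ⊆ s ∩ t :=
    subset_of_interiorPoint_mem_convexHull (K.indep htf) htne Finset.inter_subset_right hxt hxst
  exact Finset.Subset.antisymm (h1.trans Finset.inter_subset_right)
    (h2.trans Finset.inter_subset_left)

/-- The segment from a point of the hull to a point of the intrinsic interior stays in the
intrinsic interior (except possibly at the endpoint). -/
theorem combo_mem_intrinsicInterior {E : Type*} [NormedAddCommGroup E]
    [NormedSpace ℝ E] {s : Finset E} (hs : AffineIndependent ℝ ((↑) : s → E))
    (hne : s.Nonempty) {c x : E} (hc : c ∈ convexHull ℝ (s : Set E))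
    (hx : x ∈ intrinsicInterior ℝ (convexHull ℝ (s : Set E)))
    {a b : ℝ} (ha : 0 ≤ a) (hb : 0 < b) (hab : a + b = 1) :
    a • c + b • x ∈ intrinsicInterior ℝ (convexHull ℝ (s : Set E)) := by
  obtain ⟨κ, hκ1, hκ0, hκnn, hchar⟩ := exists_barycentric_coords s hs hne
  rw [hchar] at hx ⊢
  obtain ⟨hxhull, hxpos⟩ := hx
  refine ⟨(convex_convexHull ℝ (s : Set E)) hc hxhull ha hb.le hab, ?_⟩
  intro v hv
  have hline : a • c + b • x = AffineMap.lineMap c x b := by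
    rw [AffineMap.lineMap_apply]
    have : a = 1 - b := by linarith
    subst this
    simp [vsub_eq_sub, vadd_eq_add]
    module
  rw [hline, AffineMap.apply_lineMap]
  rw [AffineMap.lineMap_apply]
  have h1 := hκnn c hc v hv
  have h2 := hxpos v hv
  simp only [vsub_eq_sub, vadd_eq_add, smul_eq_mul]
  nlinarith


open Geometry

/-- The open star of a vertex `v` of a simplicial complex `K`. -/
def openStar {E : Type*} [NormedAddCommGroup E] [NormedSpace ℝ E]
    (K : SimplicialComplex ℝ E) (v : E) : Set E :=
  ⋃ s ∈ {s | s ∈ K.faces ∧ v ∈ s}, intrinsicInterior ℝ (convexHull ℝ (s : Set E))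

/-- Nonempty finite intersections of open stars are star-convex (hence
contractible): for a face `W ∈ K.faces` and any point `c` of the intrinsic
interior of `convexHull ℝ ↑W`, the intersection `⋂_{v ∈ W} st(v)` contains `c`
and is star-convex with respect to `c`; in particular it is nonempty.  This is
the content of the good-cover property of the open-star cover. -/
theorem iInter_openStar_starConvex {E : Type*} [NormedAddCommGroup E]
    [NormedSpace ℝ E] (K : SimplicialComplex ℝ E) (W : Finset E)
    (hW : W ∈ K.faces) (c : E)
    (hc : c ∈ intrinsicInterior ℝ (convexHull ℝ (W : Set E))) :
    (c ∈ ⋂ v ∈ W, openStar K v) ∧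
    StarConvex ℝ c (⋂ v ∈ W, openStar K v) ∧
    (⋂ v ∈ W, openStar K v).Nonempty := by
  classical
  have hWne : W.Nonempty := Finset.nonempty_of_ne_empty (fun h => K.empty_notMem (h ▸ hW))
  have hcmem : c ∈ ⋂ v ∈ W, openStar K v := by
    refine Set.mem_iInter₂.2 fun v hv => ?_
    exact Set.mem_biUnion (show W ∈ {s | s ∈ K.faces ∧ v ∈ s} from ⟨hW, hv⟩) hc
  refine ⟨hcmem, ?_, ⟨c, hcmem⟩⟩
  intro x hx a b ha hb hab
  rcases eq_or_lt_of_le hb with hb0 | hbpos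
  · have hb' : b = 0 := hb0.symm
    subst hb'
    have ha' : a = 1 := by linarith
    subst ha'
    simpa using hcmem
  have hx' := Set.mem_iInter₂.1 hx
  obtain ⟨v₀, hv₀⟩ := hWne
  obtain ⟨s₀, hs₀mem, hxs₀⟩ := Set.mem_iUnion₂.1 (hx' v₀ hv₀)
  obtain ⟨hs₀f, -⟩ := hs₀mem
  have hWs₀ : ∀ v ∈ W, v ∈ s₀ := by
    intro v hv
    obtain ⟨sv, ⟨hsvf, hvsv⟩, hxsv⟩ := Set.mem_iUnion₂.1 (hx' v hv)
    have heq : sv = s₀ := K.eq_of_mem_intrinsicInterior hsvf hs₀f hxsv hxs₀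
    exact heq ▸ hvsv
  have hs₀ne : s₀.Nonempty :=
    Finset.nonempty_of_ne_empty (fun h => K.empty_notMem (h ▸ hs₀f))
  have hcs₀ : c ∈ convexHull ℝ (s₀ : Set E) := by
    refine convexHull_mono (fun v hv => hWs₀ v hv) (intrinsicInterior_subset hc)
  have key := combo_mem_intrinsicInterior (K.indep hs₀f) hs₀ne hcs₀ hxs₀ ha hbpos hab
  refine Set.mem_iInter₂.2 fun v hv => ?_
  exact Set.mem_biUnion (show s₀ ∈ {s | s ∈ K.faces ∧ v ∈ s} from ⟨hs₀f, hWs₀ v hv⟩) key
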